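/- Let μ be the Gibbs distribution of a spin system on a finite graph G = (V,E) that is M-coupling independent (with witnessing weight function ρ), let V = U_1 ⊎ ⋯ ⊎ U_k be a partition, and let 0 ≤ r ≤ k−2M, R ⊆ [k] with |R| = r, and τ ∈ [q]^{U_R} be any pinning. Then the relaxation time of the (k−r)↔1 down-up walk on μ^τ is at most 2; that is, for every f: [q]^V → ℝ, Var_{μ^τ}[f] ≤ (2/(k−r)) · Σ_{j ∈ [k]∖R} μ^τ[Var_{V∖U_{R∪{j}}}[f]]. Moreover, for any two configurations X, Y ∈ [q]^{V∖U_R} that differ at exactly one vertex v₀, there is a coupling (X′, Y′) of one step of this down-up walk started from X and from Y (i.e., pick the same j ∈ [k]∖R uniformly at random and resample the coordinates outside U_{R∪{j}} from μ conditioned on τ and the current values on U_j) such that E[H_ρ(X′,Y′)] ≤ (M/(k−r))·ρ(v₀) ≤ (1/2)·ρ(v₀). -/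

import Mathlib

open Finset
open scoped BigOperators Classical

namespace Paper

/-- Configurations: assignments of one of `q` spins to each of `n` vertices. -/
abbrev Config (n q : ℕ) := Fin n → Fin q

/-- A spin system on a graph `G` on vertex set `Fin n` with spin set `Fin q`:
nonnegative external fields and nonnegative symmetric interaction matrices. -/
structure SpinSystem (n q : ℕ) (G : SimpleGraph (Fin n)) where
  b : Fin n → Fin q → ℝ
  A : Fin n → Fin n → Fin q → Fin q → ℝ
  b_nonneg : ∀ v a, 0 ≤ b v a
  A_nonneg : ∀ v w a c, 0 ≤ A v w a c
  A_symm : ∀ v w a c, A v w a c = A w v c a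

variable {n q k : ℕ}

/-- The number of neighbours of `v` (in `G`) lying inside `Λ`. -/
noncomputable def degIn (G : SimpleGraph (Fin n)) (Λ : Finset (Fin n)) (v : Fin n) : ℕ :=
  (Λ.filter fun w => G.Adj v w).card

/-- The maximum degree of `G`. -/
noncomputable def maxDeg (G : SimpleGraph (Fin n)) : ℕ :=
  univ.sup fun v => degIn G univ v

/-- The edges of `G`, listed as ordered pairs `p` with `p.1 < p.2`. -/
noncomputable def edgePairs (G : SimpleGraph (Fin n)) : Finset (Fin n × Fin n) :=
  univ.filter fun p => p.1 < p.2 ∧ G.Adj p.1 p.2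

/-- Conditional Gibbs weight: the free set is `Λ`, and the pinning uses the values
of `τ` outside of `Λ`.  Edges lying entirely outside `Λ` are dropped. -/
noncomputable def condWeight {G : SimpleGraph (Fin n)} (S : SpinSystem n q G)
    (Λ : Finset (Fin n)) (τ σ : Config n q) : ℝ :=
  (if ∀ v, v ∉ Λ → σ v = τ v then (1 : ℝ) else 0)
    * (∏ v ∈ Λ, S.b v (σ v))
    * ∏ p ∈ (edgePairs G).filter (fun p => p.1 ∈ Λ ∨ p.2 ∈ Λ),
        S.A p.1 p.2 (σ p.1) (σ p.2)

/-- The conditional Gibbs distribution `μ^τ` with free set `Λ` and pinning `τ`. -/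
noncomputable def condDist {G : SimpleGraph (Fin n)} (S : SpinSystem n q G)
    (Λ : Finset (Fin n)) (τ : Config n q) : Config n q → ℝ :=
  fun σ => condWeight S Λ τ σ / ∑ σ' : Config n q, condWeight S Λ τ σ'

/-- The Gibbs distribution of the spin system. -/
noncomputable def gibbsDist {G : SimpleGraph (Fin n)} (S : SpinSystem n q G) :
    Config n q → ℝ :=
  fun σ => condWeight S univ σ σ / ∑ σ' : Config n q, condWeight S univ σ' σ'

/-- Every conditional weight has positive total mass. -/
def PosCondMass {G : SimpleGraph (Fin n)} (S : SpinSystem n q G) : Prop :=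
  ∀ (Λ : Finset (Fin n)) (τ : Config n q), 0 < ∑ σ : Config n q, condWeight S Λ τ σ

/-- Expectation of `f` under (the finitely supported density) `μ`. -/
noncomputable def expVal (μ f : Config n q → ℝ) : ℝ := ∑ σ, μ σ * f σ

/-- Variance of `f` under `μ`. -/
noncomputable def varD (μ f : Config n q → ℝ) : ℝ :=
  expVal μ fun σ => (f σ - expVal μ f) ^ 2

/-- `μ` conditioned to agree with `σ₀` on the set `T`. -/
noncomputable def restrictDist (μ : Config n q → ℝ) (T : Finset (Fin n)) (σ₀ : Config n q) :
    Config n q → ℝ :=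
  fun σ => (if ∀ v ∈ T, σ v = σ₀ v then μ σ else 0)
    / ∑ σ' ∈ univ.filter (fun σ' : Config n q => ∀ v ∈ T, σ' v = σ₀ v), μ σ'

/-- `μ[Var_S[f]]`: the average over `σ ~ μ` of the variance of `f` under `μ`
conditioned on the coordinates outside the free set `Sfree`. -/
noncomputable def avgCondVar (μ : Config n q → ℝ) (Sfree : Finset (Fin n))
    (f : Config n q → ℝ) : ℝ :=
  ∑ σ, μ σ * varD (restrictDist μ Sfreeᶜ σ) f

/-- `C` is an upper bound on the relaxation time of the Glauber dynamics on `μ`: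
approximate tensorization of variance with constant `C`. -/
def IsRelaxBound (μ : Config n q → ℝ) (C : ℝ) : Prop :=
  0 ≤ C ∧ ∀ f : Config n q → ℝ,
    varD μ f ≤ C / (n : ℝ) * ∑ v : Fin n, avgCondVar μ {v} f

/-- `π` is a coupling of `μ` and `ν`. -/
structure IsCoupling (μ ν : Config n q → ℝ) (π : Config n q → Config n q → ℝ) : Prop where
  nonneg : ∀ x y, 0 ≤ π x y
  fst_marginal : ∀ x, ∑ y, π x y = μ x
  snd_marginal : ∀ y, ∑ x, π x y = ν y

/-- Weighted Hamming distance with weight function `ρ`. -/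
noncomputable def hamW (ρ : Fin n → ℕ) (x y : Config n q) : ℝ :=
  ∑ v ∈ univ.filter (fun v => x v ≠ y v), (ρ v : ℝ)

/-- Expected weighted Hamming distance under a coupling `π`. -/
noncomputable def expHam (π : Config n q → Config n q → ℝ) (ρ : Fin n → ℕ) : ℝ :=
  ∑ x, ∑ y, π x y * hamW ρ x y

/-- Coupling independence (with a fixed witnessing weight `ρ`) of the Gibbs
distribution of the spin system `S`, using Gibbs conditional distributions. -/
def CoupIndepWith {G : SimpleGraph (Fin n)} (S : SpinSystem n q G) (ρ : Fin n → ℕ)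
    (C : ℝ) : Prop :=
  (∀ v, 0 < ρ v) ∧
  ∀ (P : Finset (Fin n)) (v₀ : Fin n) (σ₁ σ₂ : Config n q),
    v₀ ∈ P → σ₁ v₀ ≠ σ₂ v₀ → (∀ v ∈ P, v ≠ v₀ → σ₁ v = σ₂ v) →
    ∃ π, IsCoupling (condDist S Pᶜ σ₁) (condDist S Pᶜ σ₂) π ∧
      expHam π ρ ≤ C * (ρ v₀ : ℝ)

/-- The spin system `S` is `C`-coupling independent. -/
def CoupIndep {G : SimpleGraph (Fin n)} (S : SpinSystem n q G) (C : ℝ) : Prop :=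
  ∃ ρ : Fin n → ℕ, CoupIndepWith S ρ C

/-- `C`-coupling independence for a bare distribution `μ`, using conditionals
obtained by restriction. -/
def CoupIndepDist (μ : Config n q → ℝ) (C : ℝ) : Prop :=
  ∃ ρ : Fin n → ℕ, (∀ v, 0 < ρ v) ∧
  ∀ (P : Finset (Fin n)) (v₀ : Fin n) (σ₁ σ₂ : Config n q),
    v₀ ∈ P → σ₁ v₀ ≠ σ₂ v₀ → (∀ v ∈ P, v ≠ v₀ → σ₁ v = σ₂ v) →
    ∃ π, IsCoupling (restrictDist μ P σ₁) (restrictDist μ P σ₂) π ∧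
      expHam π ρ ≤ C * (ρ v₀ : ℝ)

/-- `Λ ∈ D(η)`: the induced subgraph `G[Λ]` has maximum degree at most `η·Δ`. -/
def InDeta (G : SimpleGraph (Fin n)) (η : ℝ) (Λ : Finset (Fin n)) : Prop :=
  ∀ v ∈ Λ, (degIn G Λ v : ℝ) ≤ η * (maxDeg G : ℝ)

/-- `U` is a partition of the vertex set into `k` (possibly empty) parts. -/
def IsPartition (U : Fin k → Finset (Fin n)) : Prop :=
  (∀ i j, i ≠ j → Disjoint (U i) (U j)) ∧ ∀ v : Fin n, ∃ i, v ∈ U i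

/-- A `(ξ,k)`-degree partition of `G`. -/
def IsDegreePartition (G : SimpleGraph (Fin n)) (ξ : ℝ) (U : Fin k → Finset (Fin n)) :
    Prop :=
  IsPartition U ∧ ∀ (v : Fin n) (i : Fin k),
    (degIn G (U i) v : ℝ) ≤ (1 + ξ) * (maxDeg G : ℝ) / (k : ℝ)

/-- `U_R = ⋃_{i ∈ R} U_i`. -/
noncomputable def unionBlocks (U : Fin k → Finset (Fin n)) (R : Finset (Fin k)) :
    Finset (Fin n) :=
  R.biUnion U

/-- The Glauber update `P_v` at vertex `v` for the distribution `μ`. -/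
noncomputable def glauberUpdate (μ : Config n q → ℝ) (v : Fin n) (x y : Config n q) : ℝ :=
  if ∀ u, u ≠ v → y u = x u then
    (if 0 < ∑ σ ∈ univ.filter (fun σ : Config n q => ∀ u, u ≠ v → σ u = x u), μ σ then
      μ y / ∑ σ ∈ univ.filter (fun σ : Config n q => ∀ u, u ≠ v → σ u = x u), μ σ
    else if y = x then 1 else 0)
  else 0

/-- The transition matrix of the Glauber dynamics on `μ`. -/
noncomputable def glauberP (μ : Config n q → ℝ) : Config n q → Config n q → ℝ :=
  fun x y => (1 / (n : ℝ)) * ∑ v : Fin n, glauberUpdate μ v x y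

/-- One step of a Markov kernel applied to a distribution. -/
noncomputable def stepD (P : Config n q → Config n q → ℝ) (ν : Config n q → ℝ) :
    Config n q → ℝ :=
  fun y => ∑ x, ν x * P x y

/-- The Dirac distribution at `x₀`. -/
noncomputable def delta (x₀ : Config n q) : Config n q → ℝ :=
  fun y => if y = x₀ then 1 else 0

/-- Total variation distance. -/
noncomputable def dTV (μ ν : Config n q → ℝ) : ℝ := (1 / 2) * ∑ σ, |μ σ - ν σ|

/-- TV distance to `μ` after `t` steps of the Glauber dynamics on `μ` started at `x₀`. -/
noncomputable def glauberDist (μ : Config n q → ℝ) (x₀ : Config n q) (t : ℕ) : ℝ :=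
  dTV ((stepD (glauberP μ))^[t] (delta x₀)) μ

/-- Coordinatewise partial order on configurations induced by the per-vertex
total orders `le`. -/
def ConfLE (le : Fin n → Fin q → Fin q → Prop) (x y : Config n q) : Prop :=
  ∀ v, le v (x v) (y v)

/-- Stochastic domination with respect to the order `le`. -/
def StochDom (le : Fin n → Fin q → Fin q → Prop) (μ ν : Config n q → ℝ) : Prop :=
  ∃ π, IsCoupling μ ν π ∧ ∀ x y, π x y ≠ 0 → ConfLE le x y

/-- `μ` is a monotone spin system w.r.t. the per-vertex orders `le`. -/
def MonotoneSystem (le : Fin n → Fin q → Fin q → Prop) (μ : Config n q → ℝ) : Prop :=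
  ∀ (v : Fin n) (x y : Config n q), ConfLE le x y →
    StochDom le (glauberUpdate μ v x) (glauberUpdate μ v y)

/-- Hardcore weight: spin `1` means occupied. -/
noncomputable def hcWeight (G : SimpleGraph (Fin n)) (lam : ℝ) (σ : Config n 2) : ℝ :=
  if ∀ u v, G.Adj u v → ¬(σ u = 1 ∧ σ v = 1) then
    lam ^ (univ.filter fun v => σ v = 1).card
  else 0

/-- The hardcore distribution on `G` with fugacity `lam`. -/
noncomputable def hardcoreDist (G : SimpleGraph (Fin n)) (lam : ℝ) : Config n 2 → ℝ :=
  fun σ => hcWeight G lam σ / ∑ σ' : Config n 2, hcWeight G lam σ'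

/-- The tree uniqueness threshold `λ_c(Δ)`. -/
noncomputable def lambdaC (Δ : ℕ) : ℝ := ((Δ : ℝ) - 1) ^ (Δ - 1) / ((Δ : ℝ) - 2) ^ Δ

/-- `G` is bipartite with parts `VL` and `VLᶜ`. -/
def Bipartite (G : SimpleGraph (Fin n)) (VL : Finset (Fin n)) : Prop :=
  ∀ u v, G.Adj u v → (u ∈ VL ↔ v ∉ VL)

/-- Maximum degree of `G` among the vertices of `W`. -/
noncomputable def maxDegOn (G : SimpleGraph (Fin n)) (W : Finset (Fin n)) : ℕ :=
  W.sup fun v => degIn G univ v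

/-- The marginal of `μ` on `W`, realized as a distribution on full configurations
that vanish (take spin `0`) outside of `W`. -/
noncomputable def marginalOn (μ : Config n 2 → ℝ) (W : Finset (Fin n)) :
    Config n 2 → ℝ :=
  fun σ => if ∀ v, v ∉ W → σ v = 0 then
      ∑ σ' ∈ univ.filter (fun σ' : Config n 2 => ∀ v ∈ W, σ' v = σ v), μ σ'
    else 0

/-- Proper list colorings of `G` with lists `L`. -/
noncomputable def properColorings (G : SimpleGraph (Fin n)) (L : Fin n → Finset (Fin q)) :
    Finset (Config n q) :=
  univ.filter fun σ => (∀ v, σ v ∈ L v) ∧ ∀ u v, G.Adj u v → σ u ≠ σ v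

/-- Uniform distribution over a finite set of configurations. -/
noncomputable def uniformOn (Ω : Finset (Config n q)) : Config n q → ℝ :=
  fun σ => if σ ∈ Ω then (1 : ℝ) / (Ω.card : ℝ) else 0

/-- The subgraph of `G` induced on `W` (kept on the same vertex type). -/
def restrictG (G : SimpleGraph (Fin n)) (W : Finset (Fin n)) : SimpleGraph (Fin n) where
  Adj u v := G.Adj u v ∧ u ∈ W ∧ v ∈ W
  symm := ⟨fun u v h => ⟨G.symm.symm u v h.1, h.2.2, h.2.1⟩⟩
  loopless := ⟨fun v h => G.loopless.irrefl v h.1⟩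

/-- The vertex set of the connected component of `v` in `G[W]` (empty if `v ∉ W`). -/
noncomputable def compIn (G : SimpleGraph (Fin n)) (W : Finset (Fin n)) (v : Fin n) :
    Finset (Fin n) :=
  if v ∈ W then univ.filter (fun w => w ∈ W ∧ (restrictG G W).Reachable v w) else ∅



/-!
Let `Q` be the operator of the `(k − r) ↔ 1` down-up walk on `μ^τ`. For two configurations
differing at one vertex `v₀`, only the step resampling the block of `v₀` can separate them, and
coupling independence controls it; by path coupling, `Q` contracts Hamming-Lipschitz constants by
`θ = M / (k − r) ≤ 1/2`. So for centred `f`, `Q^s f` is centred and `O(θ^s)`-Lipschitz, whence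
`‖Q^s f‖² = O(θ^(2s))` in `L²(μ^τ)`. As `Q` is self-adjoint, `s ↦ ‖Q^s f‖²` is log-convex, which
forces `‖Q f‖ ≤ θ ‖f‖` and hence `⟨f, Q f⟩ ≤ θ ‖f‖²`. The variance bound is this spectral gap,
since the average conditional variance equals `‖f‖² − ⟨f, Q f⟩`.
-/

section Gibbs

variable {G : SimpleGraph (Fin n)} (S : SpinSystem n q G)

theorem condWeight_nonneg (Λ : Finset (Fin n)) (τ σ : Config n q) :
    0 ≤ condWeight S Λ τ σ := by
  unfold condWeight
  refine mul_nonneg (mul_nonneg ?_ (prod_nonneg fun v _ => S.b_nonneg _ _))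
    (prod_nonneg fun p _ => S.A_nonneg _ _ _ _)
  split_ifs <;> norm_num

theorem condWeight_eq_zero {Λ : Finset (Fin n)} {τ σ : Config n q}
    (h : ¬ ∀ v, v ∉ Λ → σ v = τ v) : condWeight S Λ τ σ = 0 := by
  rw [condWeight, if_neg h, zero_mul, zero_mul]

theorem condDist_nonneg (Λ : Finset (Fin n)) (τ σ : Config n q) : 0 ≤ condDist S Λ τ σ :=
  div_nonneg (condWeight_nonneg S Λ τ σ) (sum_nonneg fun σ' _ => condWeight_nonneg S Λ τ σ')

theorem sum_condDist (hpos : PosCondMass S) (Λ : Finset (Fin n)) (τ : Config n q) :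
    ∑ σ, condDist S Λ τ σ = 1 := by
  unfold condDist
  rw [← sum_div, div_self (hpos Λ τ).ne']

theorem condDist_congr {Λ : Finset (Fin n)} {τ₁ τ₂ : Config n q}
    (h : ∀ v, v ∉ Λ → τ₁ v = τ₂ v) : condDist S Λ τ₁ = condDist S Λ τ₂ := by
  have hW : ∀ σ, condWeight S Λ τ₁ σ = condWeight S Λ τ₂ σ := fun σ => by
    simp only [condWeight]
    congr 2
    exact if_congr ⟨fun hσ v hv => (hσ v hv).trans (h v hv),
      fun hσ v hv => (hσ v hv).trans (h v hv).symm⟩ rfl rfl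
  funext σ
  simp only [condDist, hW]

theorem eq_of_condDist_ne_zero {Λ : Finset (Fin n)} {τ σ : Config n q}
    (h : condDist S Λ τ σ ≠ 0) : ∀ v, v ∉ Λ → σ v = τ v := by
  by_contra hc
  exact h (by rw [condDist, condWeight_eq_zero S hc, zero_div])

/-- Spatial Markov property; the factor collects the fields on `Λ \ Λ'` and the interactions
not touching `Λ'`, all of which are frozen at their values in `x`. -/
theorem exists_condWeight_eq_mul {Λ' Λ : Finset (Fin n)} (hsub : Λ' ⊆ Λ) {τ x : Config n q}
    (hx : ∀ v, v ∉ Λ → x v = τ v) :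
    ∃ c, ∀ y, (∀ v, v ∉ Λ' → y v = x v) → condWeight S Λ τ y = c * condWeight S Λ' x y := by
  set E : Finset (Fin n) → Finset (Fin n × Fin n) :=
    fun Λ => (edgePairs G).filter fun p => p.1 ∈ Λ ∨ p.2 ∈ Λ
  have hE : E Λ' ⊆ E Λ := fun p hp => by
    simp only [E, mem_filter] at hp ⊢
    exact ⟨hp.1, hp.2.imp (@hsub _) (@hsub _)⟩
  refine ⟨(∏ v ∈ Λ \ Λ', S.b v (x v)) * ∏ p ∈ E Λ \ E Λ', S.A p.1 p.2 (x p.1) (x p.2),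
    fun y hy => ?_⟩
  have hyτ : ∀ v, v ∉ Λ → y v = τ v := fun v hv => (hy v (fun h => hv (hsub h))).trans (hx v hv)
  have hb : ∏ v ∈ Λ, S.b v (y v) = (∏ v ∈ Λ \ Λ', S.b v (x v)) * ∏ v ∈ Λ', S.b v (y v) := by
    rw [← prod_sdiff hsub]
    congr 1
    exact prod_congr rfl fun v hv => by rw [hy v (mem_sdiff.1 hv).2]
  have hA : ∏ p ∈ E Λ, S.A p.1 p.2 (y p.1) (y p.2) =
      (∏ p ∈ E Λ \ E Λ', S.A p.1 p.2 (x p.1) (x p.2)) *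
        ∏ p ∈ E Λ', S.A p.1 p.2 (y p.1) (y p.2) := by
    rw [← prod_sdiff hE]
    congr 1
    refine prod_congr rfl fun p hp => ?_
    obtain ⟨hpΛ, hpΛ'⟩ := mem_sdiff.1 hp
    have hout : p.1 ∉ Λ' ∧ p.2 ∉ Λ' := by
      simpa [E, (mem_filter.1 hpΛ).1] using hpΛ'
    rw [hy p.1 hout.1, hy p.2 hout.2]
  simp only [condWeight, if_pos hyτ, if_pos hy]
  rw [hb, show (edgePairs G).filter (fun p => p.1 ∈ Λ ∨ p.2 ∈ Λ) = E Λ from rfl, hA]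
  ring

theorem restrictDist_condDist (hpos : PosCondMass S) {Λ' Λ : Finset (Fin n)} (hsub : Λ' ⊆ Λ)
    {τ x : Config n q} (hx : condDist S Λ τ x ≠ 0) :
    restrictDist (condDist S Λ τ) Λ'ᶜ x = condDist S Λ' x := by
  obtain ⟨c, hc⟩ := exists_condWeight_eq_mul S hsub (eq_of_condDist_ne_zero S hx)
  have hc0 : c ≠ 0 := by
    rintro rfl
    exact hx (by rw [condDist, hc x fun _ _ => rfl, zero_mul, zero_div])
  have hnum : ∀ y, (if ∀ v ∈ Λ'ᶜ, y v = x v then condDist S Λ τ y else 0) =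
      c * condWeight S Λ' x y / ∑ σ, condWeight S Λ τ σ := fun y => by
    by_cases hy : ∀ v ∈ Λ'ᶜ, y v = x v
    · rw [if_pos hy, condDist, hc y fun v hv => hy v (mem_compl.2 hv)]
    · rw [if_neg hy, condWeight_eq_zero S fun h => hy fun v hv => h v (mem_compl.1 hv),
        mul_zero, zero_div]
  funext y
  rw [restrictDist, sum_filter, hnum y, sum_congr rfl fun σ _ => hnum σ, ← sum_div, ← mul_sum,
    div_div_div_cancel_right₀ (hpos Λ τ).ne', mul_div_mul_left _ _ hc0, condDist]

end Gibbs

section Restrict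

variable (μ : Config n q → ℝ) (T : Finset (Fin n))

noncomputable def restrictMass (σ : Config n q) : ℝ :=
  ∑ σ' ∈ univ.filter (fun σ' : Config n q => ∀ v ∈ T, σ' v = σ v), μ σ'

theorem restrictDist_apply (σ y : Config n q) :
    restrictDist μ T σ y = (if ∀ v ∈ T, y v = σ v then μ y else 0) / restrictMass μ T σ :=
  rfl

variable {μ T}

theorem forall_eq_iff_of_eqOn {x y : Config n q} (h : ∀ v ∈ T, y v = x v) (σ : Config n q) :
    (∀ v ∈ T, σ v = y v) ↔ ∀ v ∈ T, σ v = x v :=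
  ⟨fun hσ v hv => (hσ v hv).trans (h v hv), fun hσ v hv => (hσ v hv).trans (h v hv).symm⟩

theorem restrictMass_congr {x y : Config n q} (h : ∀ v ∈ T, y v = x v) :
    restrictMass μ T y = restrictMass μ T x := by
  simp only [restrictMass, forall_eq_iff_of_eqOn h]

theorem restrictDist_congr {x y : Config n q} (h : ∀ v ∈ T, y v = x v) :
    restrictDist μ T y = restrictDist μ T x := by
  funext σ
  simp only [restrictDist_apply, restrictMass_congr h, forall_eq_iff_of_eqOn h]

theorem le_restrictMass (hμ0 : ∀ σ, 0 ≤ μ σ) (σ : Config n q) : μ σ ≤ restrictMass μ T σ :=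
  single_le_sum (fun σ' _ => hμ0 σ') (mem_filter.2 ⟨mem_univ σ, fun _ _ => rfl⟩)

theorem sum_restrictDist (σ : Config n q) :
    ∑ y, restrictDist μ T σ y = if restrictMass μ T σ = 0 then 0 else 1 := by
  simp only [restrictDist_apply]
  rw [← sum_div, ← sum_filter]
  split_ifs with h
  · rw [h, div_zero]
  · exact div_self h

theorem sum_restrictDist_of_ne_zero (hμ0 : ∀ σ, 0 ≤ μ σ) {σ : Config n q} (hσ : μ σ ≠ 0) :
    ∑ y, restrictDist μ T σ y = 1 := by
  rw [sum_restrictDist, if_neg ((lt_of_lt_of_le ((hμ0 σ).lt_of_ne' hσ)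
    (le_restrictMass hμ0 σ)).ne')]

theorem mul_restrictDist_comm (σ y : Config n q) :
    μ σ * restrictDist μ T σ y = μ y * restrictDist μ T y σ := by
  by_cases h : ∀ v ∈ T, y v = σ v
  · rw [restrictDist_apply, restrictDist_apply, if_pos h, if_pos fun v hv => (h v hv).symm,
      restrictMass_congr h]
    ring
  · rw [restrictDist_apply, restrictDist_apply, if_neg h,
      if_neg fun h' => h fun v hv => (h' v hv).symm, zero_div, zero_div, mul_zero, mul_zero]

theorem sum_mul_restrictDist (hμ0 : ∀ σ, 0 ≤ μ σ) (y : Config n q) :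
    ∑ σ, μ σ * restrictDist μ T σ y = μ y := by
  rw [sum_congr rfl fun σ _ => mul_restrictDist_comm σ y, ← mul_sum]
  by_cases hy : μ y = 0
  · rw [hy, zero_mul]
  · rw [sum_restrictDist_of_ne_zero hμ0 hy, mul_one]

end Restrict

section L2

variable {μ : Config n q → ℝ}

noncomputable def l2Inner (μ u v : Config n q → ℝ) : ℝ := ∑ σ, μ σ * (u σ * v σ)

theorem l2Inner_comm (u v : Config n q → ℝ) : l2Inner μ u v = l2Inner μ v u := by
  simp only [l2Inner, mul_comm (u _)]

theorem l2Inner_self_nonneg (hμ0 : ∀ σ, 0 ≤ μ σ) (u : Config n q → ℝ) : 0 ≤ l2Inner μ u u :=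
  sum_nonneg fun σ _ => mul_nonneg (hμ0 σ) (mul_self_nonneg _)

theorem sq_l2Inner_le (hμ0 : ∀ σ, 0 ≤ μ σ) (u v : Config n q → ℝ) :
    l2Inner μ u v ^ 2 ≤ l2Inner μ u u * l2Inner μ v v :=
  sum_sq_le_sum_mul_sum_of_sq_le_mul _ (fun σ _ => mul_nonneg (hμ0 σ) (mul_self_nonneg _))
    (fun σ _ => mul_nonneg (hμ0 σ) (mul_self_nonneg _)) fun σ _ => le_of_eq (by ring)

noncomputable def condExpOn (μ : Config n q → ℝ) (T : Finset (Fin n)) (f : Config n q → ℝ) :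
    Config n q → ℝ :=
  fun σ => expVal (restrictDist μ T σ) f

variable {T : Finset (Fin n)}

theorem expVal_condExpOn (hμ0 : ∀ σ, 0 ≤ μ σ) (g : Config n q → ℝ) :
    expVal μ (condExpOn μ T g) = expVal μ g := by
  simp only [expVal, condExpOn, mul_sum, ← mul_assoc]
  rw [sum_comm]
  simp only [← sum_mul, sum_mul_restrictDist hμ0]

theorem l2Inner_condExpOn_comm (u v : Config n q → ℝ) :
    l2Inner μ u (condExpOn μ T v) = l2Inner μ (condExpOn μ T u) v := by
  have key : ∀ σ y, μ σ * restrictDist μ T σ y * (u σ * v y) =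
      μ y * restrictDist μ T y σ * (u σ * v y) := fun σ y => by
    rw [mul_restrictDist_comm]
  simp only [l2Inner, condExpOn, expVal, mul_sum, sum_mul]
  rw [sum_comm]
  refine sum_congr rfl fun y _ => sum_congr rfl fun σ _ => ?_
  linear_combination key σ y

theorem condExpOn_condExpOn (f : Config n q → ℝ) :
    condExpOn μ T (condExpOn μ T f) = condExpOn μ T f := by
  funext σ
  have hconst : ∀ y, restrictDist μ T σ y * condExpOn μ T f y =
      restrictDist μ T σ y * condExpOn μ T f σ := fun y => by
    by_cases h : ∀ v ∈ T, y v = σ v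
    · simp only [condExpOn, restrictDist_congr h]
    · rw [restrictDist_apply, if_neg h, zero_div, zero_mul, zero_mul]
  change ∑ y, restrictDist μ T σ y * condExpOn μ T f y = condExpOn μ T f σ
  rw [sum_congr rfl fun y _ => hconst y, ← sum_mul, sum_restrictDist]
  split_ifs with h
  · simp [condExpOn, expVal, restrictDist_apply, h]
  · rw [one_mul]

theorem l2Inner_condExpOn_self (f : Config n q → ℝ) :
    l2Inner μ (condExpOn μ T f) (condExpOn μ T f) = l2Inner μ f (condExpOn μ T f) := by
  rw [l2Inner_condExpOn_comm, condExpOn_condExpOn, l2Inner_comm]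

end L2

section Variance

variable {μ ν : Config n q → ℝ}

theorem expVal_sub_const (hν : ∑ σ, ν σ = 1) (f : Config n q → ℝ) (c : ℝ) :
    expVal ν (fun σ => f σ - c) = expVal ν f - c := by
  simp only [expVal, mul_sub, sum_sub_distrib, ← sum_mul, hν, one_mul]

theorem varD_sub_const (hν : ∑ σ, ν σ = 1) (f : Config n q → ℝ) (c : ℝ) :
    varD ν (fun σ => f σ - c) = varD ν f := by
  simp only [varD, expVal_sub_const hν, sub_sub_sub_cancel_right]

theorem varD_eq_l2Inner (f : Config n q → ℝ) :
    varD ν f = l2Inner ν (fun σ => f σ - expVal ν f) (fun σ => f σ - expVal ν f) := by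
  simp only [varD, expVal, l2Inner, sq]

theorem varD_nonneg (hν0 : ∀ σ, 0 ≤ ν σ) (f : Config n q → ℝ) : 0 ≤ varD ν f :=
  sum_nonneg fun σ _ => mul_nonneg (hν0 σ) (sq_nonneg _)

theorem varD_eq_sub (hν : ∑ σ, ν σ = 1) (f : Config n q → ℝ) :
    varD ν f = expVal ν (fun σ => f σ * f σ) - expVal ν f * expVal ν f := by
  have h : ∀ σ, ν σ * (f σ - expVal ν f) ^ 2 =
      ν σ * (f σ * f σ) - 2 * expVal ν f * (ν σ * f σ) + expVal ν f ^ 2 * ν σ := fun σ => by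
    ring
  rw [varD, expVal, sum_congr rfl fun σ _ => h σ, sum_add_distrib, sum_sub_distrib, ← mul_sum,
    ← mul_sum, hν]
  simp only [expVal]
  ring

theorem avgCondVar_sub_const (hμ0 : ∀ σ, 0 ≤ μ σ) (Sfree : Finset (Fin n))
    (f : Config n q → ℝ) (c : ℝ) :
    avgCondVar μ Sfree (fun σ => f σ - c) = avgCondVar μ Sfree f := by
  refine sum_congr rfl fun σ _ => ?_
  by_cases hσ : μ σ = 0
  · rw [hσ, zero_mul, zero_mul]
  · rw [varD_sub_const (sum_restrictDist_of_ne_zero hμ0 hσ)]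

theorem avgCondVar_compl_eq (hμ0 : ∀ σ, 0 ≤ μ σ) (T : Finset (Fin n)) (f : Config n q → ℝ) :
    avgCondVar μ Tᶜ f = l2Inner μ f f - l2Inner μ f (condExpOn μ T f) := by
  have hσ : ∀ σ, μ σ * varD (restrictDist μ T σ) f =
      μ σ * (condExpOn μ T (fun y => f y * f y) σ - condExpOn μ T f σ * condExpOn μ T f σ) :=
    fun σ => by
      by_cases h : μ σ = 0
      · rw [h, zero_mul, zero_mul]
      · rw [varD_eq_sub (sum_restrictDist_of_ne_zero hμ0 h)]
        rfl
  rw [avgCondVar, compl_compl, sum_congr rfl fun σ _ => hσ σ]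
  simp only [mul_sub, sum_sub_distrib]
  rw [← l2Inner_condExpOn_self, l2Inner]
  congr 1
  exact expVal_condExpOn hμ0 _

end Variance

section Hamming

variable (ρ : Fin n → ℕ)

theorem hamW_self (x : Config n q) : hamW ρ x x = 0 := by
  simp [hamW]

theorem hamW_le_sum (x y : Config n q) : hamW ρ x y ≤ ∑ v, (ρ v : ℝ) :=
  sum_le_sum_of_subset_of_nonneg (filter_subset _ _) fun _ _ _ => Nat.cast_nonneg _

theorem one_le_hamW {ρ : Fin n → ℕ} (hρ : ∀ v, 0 < ρ v) {x y : Config n q} (h : x ≠ y) :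
    1 ≤ hamW ρ x y := by
  obtain ⟨v, hv⟩ := Function.ne_iff.1 h
  calc (1 : ℝ) ≤ ρ v := by exact_mod_cast hρ v
    _ ≤ hamW ρ x y := single_le_sum (f := fun w => (ρ w : ℝ)) (fun _ _ => Nat.cast_nonneg _)
        (mem_filter.2 ⟨mem_univ v, hv⟩)

theorem filter_update_ne (x y : Config n q) (v₁ : Fin n) :
    univ.filter (fun v => Function.update x v₁ (y v₁) v ≠ y v) =
      (univ.filter fun v => x v ≠ y v).erase v₁ := by
  ext v
  by_cases hv : v = v₁
  · subst hv; simp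
  · simp [hv]

theorem hamW_eq_add_update {x y : Config n q} {v₁ : Fin n} (h : x v₁ ≠ y v₁) :
    hamW ρ x y = ρ v₁ + hamW ρ (Function.update x v₁ (y v₁)) y := by
  rw [hamW, hamW, filter_update_ne,
    add_sum_erase _ (fun v => (ρ v : ℝ)) (mem_filter.2 ⟨mem_univ _, h⟩)]

def HamLipschitzOn (A : Config n q → Prop) (L : ℝ) (g : Config n q → ℝ) : Prop :=
  ∀ x y, A x → A y → |g x - g y| ≤ L * hamW ρ x y

variable {ρ} {A : Config n q → Prop}

theorem hamLipschitzOn_of_adjacent (hA : ∀ x y v, A x → A y → A (Function.update x v (y v)))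
    {L : ℝ} {g : Config n q → ℝ}
    (hadj : ∀ x y v₀, A x → A y → x v₀ ≠ y v₀ → (∀ v, v ≠ v₀ → x v = y v) →
      |g x - g y| ≤ L * ρ v₀) :
    HamLipschitzOn ρ A L g := by
  intro x y hx hy
  induction hd : (univ.filter fun v => x v ≠ y v).card generalizing x with
  | zero =>
    obtain rfl : x = y := funext fun v => by
      by_contra hv
      exact (card_pos.2 ⟨v, mem_filter.2 ⟨mem_univ v, hv⟩⟩).ne' hd
    simp [hamW_self]
  | succ d ih =>
    obtain ⟨v₁, hv₁⟩ : ∃ v₁, x v₁ ≠ y v₁ := by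
      obtain ⟨v₁, hv₁⟩ := card_pos.1 (hd.symm ▸ d.succ_pos :
        0 < (univ.filter fun v => x v ≠ y v).card)
      exact ⟨v₁, (mem_filter.1 hv₁).2⟩
    set z := Function.update x v₁ (y v₁)
    have hzy : (univ.filter fun v => z v ≠ y v).card = d := by
      rw [filter_update_ne, card_erase_of_mem (s := univ.filter fun v => x v ≠ y v)
        (mem_filter.2 ⟨mem_univ _, hv₁⟩), hd, Nat.add_sub_cancel]
    have hxz := hadj x z v₁ hx (hA x y v₁ hx hy) (by simpa [z] using hv₁)
      fun v hv => (Function.update_of_ne hv _ _).symm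
    calc |g x - g y| ≤ |g x - g z| + |g z - g y| := abs_sub_le _ _ _
      _ ≤ L * ρ v₁ + L * hamW ρ z y := add_le_add hxz (ih z (hA x y v₁ hx hy) hzy)
      _ = L * hamW ρ x y := by rw [hamW_eq_add_update ρ hv₁]; ring

theorem hamLipschitzOn_two_mul_sum_abs (hρ : ∀ v, 0 < ρ v) (g : Config n q → ℝ) :
    HamLipschitzOn ρ A (2 * ∑ σ, |g σ|) g := by
  intro x y _ _
  by_cases hxy : x = y
  · simp [hxy, hamW_self]
  have hle : ∀ z, |g z| ≤ ∑ σ, |g σ| := fun z =>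
    single_le_sum (f := fun σ => |g σ|) (fun _ _ => abs_nonneg _) (mem_univ z)
  calc |g x - g y| ≤ |g x| + |g y| := abs_sub _ _
    _ ≤ 2 * ∑ σ, |g σ| := by linarith [hle x, hle y]
    _ ≤ 2 * (∑ σ, |g σ|) * hamW ρ x y :=
        le_mul_of_one_le_right (by positivity) (one_le_hamW hρ hxy)

theorem HamLipschitzOn.abs_le {μ : Config n q → ℝ} (hμ0 : ∀ σ, 0 ≤ μ σ)
    (hμ1 : ∑ σ, μ σ = 1) (hA : ∀ σ, μ σ ≠ 0 → A σ) {L : ℝ} (hL : 0 ≤ L)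
    {g : Config n q → ℝ} (hg : HamLipschitzOn ρ A L g) (hmean : expVal μ g = 0)
    {x : Config n q} (hx : A x) : |g x| ≤ L * ∑ v, (ρ v : ℝ) := by
  have hrep : g x = ∑ y, μ y * (g x - g y) := by
    simp only [mul_sub, sum_sub_distrib, ← sum_mul, hμ1, one_mul]
    rw [← expVal, hmean, sub_zero]
  calc |g x| = |∑ y, μ y * (g x - g y)| := by rw [← hrep]
    _ ≤ ∑ y, μ y * (L * ∑ v, (ρ v : ℝ)) := by
        refine (abs_sum_le_sum_abs _ _).trans (sum_le_sum fun y _ => ?_)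
        rw [abs_mul, abs_of_nonneg (hμ0 y)]
        by_cases hy : μ y = 0
        · rw [hy, zero_mul, zero_mul]
        exact mul_le_mul_of_nonneg_left ((hg x y hx (hA y hy)).trans
          (mul_le_mul_of_nonneg_left (hamW_le_sum ρ x y) hL)) (hμ0 y)
    _ = L * ∑ v, (ρ v : ℝ) := by rw [← sum_mul, hμ1, one_mul]

end Hamming

section Coupling

variable {μ₁ μ₂ : Config n q → ℝ} {π : Config n q → Config n q → ℝ}

theorem IsCoupling.fst_ne_zero (h : IsCoupling μ₁ μ₂ π) {x y : Config n q} (hxy : π x y ≠ 0) :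
    μ₁ x ≠ 0 := by
  rw [← h.fst_marginal x]
  exact ((h.nonneg x y).lt_of_ne' hxy).trans_le
    (single_le_sum (fun y' _ => h.nonneg x y') (mem_univ y)) |>.ne'

theorem IsCoupling.snd_ne_zero (h : IsCoupling μ₁ μ₂ π) {x y : Config n q} (hxy : π x y ≠ 0) :
    μ₂ y ≠ 0 := by
  rw [← h.snd_marginal y]
  exact ((h.nonneg x y).lt_of_ne' hxy).trans_le
    (single_le_sum (fun x' _ => h.nonneg x' y) (mem_univ x)) |>.ne'

theorem HamLipschitzOn.abs_expVal_sub_le {ρ : Fin n → ℕ} {A : Config n q → Prop} {L : ℝ}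
    {g : Config n q → ℝ} (hg : HamLipschitzOn ρ A L g) (hπ : IsCoupling μ₁ μ₂ π)
    (h₁ : ∀ x, μ₁ x ≠ 0 → A x) (h₂ : ∀ y, μ₂ y ≠ 0 → A y) :
    |expVal μ₁ g - expVal μ₂ g| ≤ L * expHam π ρ := by
  have hdiff : expVal μ₁ g - expVal μ₂ g = ∑ x, ∑ y, π x y * (g x - g y) := by
    simp only [expVal, ← hπ.fst_marginal, ← hπ.snd_marginal, sum_mul, mul_sub, sum_sub_distrib]
    rw [sum_comm (f := fun y x => π x y * g y)]
  rw [hdiff, expHam, mul_sum]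
  refine (abs_sum_le_sum_abs _ _).trans (sum_le_sum fun x _ => ?_)
  rw [mul_sum]
  refine (abs_sum_le_sum_abs _ _).trans (sum_le_sum fun y _ => ?_)
  by_cases hxy : π x y = 0
  · simp [hxy]
  rw [abs_mul, abs_of_nonneg (hπ.nonneg x y), mul_left_comm]
  exact mul_le_mul_of_nonneg_left
    (hg x y (h₁ x (hπ.fst_ne_zero hxy)) (h₂ y (hπ.snd_ne_zero hxy))) (hπ.nonneg x y)

noncomputable def diagCoupling (μ : Config n q → ℝ) : Config n q → Config n q → ℝ :=
  fun x y => if x = y then μ x else 0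

theorem isCoupling_diagCoupling {μ : Config n q → ℝ} (hμ0 : ∀ σ, 0 ≤ μ σ) :
    IsCoupling μ μ (diagCoupling μ) where
  nonneg x y := by unfold diagCoupling; split_ifs <;> simp [hμ0]
  fst_marginal x := by simp [diagCoupling]
  snd_marginal y := by simp [diagCoupling]

theorem expHam_diagCoupling (μ : Config n q → ℝ) (ρ : Fin n → ℕ) :
    expHam (diagCoupling μ) ρ = 0 :=
  sum_eq_zero fun x _ => sum_eq_zero fun y _ => by
    by_cases h : x = y
    · rw [h, hamW_self, mul_zero]
    · simp [diagCoupling, h]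

end Coupling

/-- The ratios `a (t + 1) / a t` of a log-convex sequence increase. -/
theorem pow_mul_le_pow_mul_of_logConvex {a : ℕ → ℝ} (ha0 : 0 < a 0) (ha1 : 0 < a 1)
    (hlog : ∀ t, a (t + 1) ^ 2 ≤ a t * a (t + 2)) (t : ℕ) : a 1 ^ t * a 0 ≤ a 0 ^ t * a t := by
  have hpos : ∀ t, 0 < a t ∧ 0 < a (t + 1) := by
    intro t
    induction t with
    | zero => exact ⟨ha0, ha1⟩
    | succ t ih =>
      refine ⟨ih.2, pos_of_mul_pos_right ((pow_pos ih.2 2).trans_le (hlog t)) ih.1.le⟩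
  have hratio : ∀ t, a 1 * a t ≤ a 0 * a (t + 1) := by
    intro t
    induction t with
    | zero => rw [mul_comm]
    | succ t ih =>
      have := hlog t
      have := (hpos t).1
      refine le_of_mul_le_mul_right ?_ this
      nlinarith [(hpos t).2]
  induction t with
  | zero => simp
  | succ t ih =>
    calc a 1 ^ (t + 1) * a 0 = a 1 * (a 1 ^ t * a 0) := by ring
      _ ≤ a 1 * (a 0 ^ t * a t) := mul_le_mul_of_nonneg_left ih ha1.le
      _ = a 0 ^ t * (a 1 * a t) := by ring
      _ ≤ a 0 ^ t * (a 0 * a (t + 1)) :=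
          mul_le_mul_of_nonneg_left (hratio t) (pow_nonneg ha0.le t)
      _ = a 0 ^ (t + 1) * a (t + 1) := by ring

/-- Otherwise `a t ≥ a 0 (a 1 / a 0) ^ t` would outgrow `C θ ^ t`. -/
theorem le_mul_of_logConvex_of_le_geom {a : ℕ → ℝ} {θ C : ℝ} (hθ : 0 ≤ θ)
    (ha : ∀ t, 0 ≤ a t) (hlog : ∀ t, a (t + 1) ^ 2 ≤ a t * a (t + 2))
    (hdecay : ∀ t, a t ≤ C * θ ^ t) : a 1 ≤ θ * a 0 := by
  by_contra! hlt
  have ha1 : 0 < a 1 := (mul_nonneg hθ (ha 0)).trans_lt hlt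
  have ha0 : 0 < a 0 := by
    refine (ha 0).lt_of_ne' fun h0 => ?_
    have := hlog 0
    rw [h0, zero_mul] at this
    nlinarith
  have hC : 0 < C := by simpa using ha0.trans_le (hdecay 0)
  obtain ⟨t, ht⟩ := exists_pow_lt_of_lt_one (div_pos ha0 hC)
    ((div_lt_one ha1).2 hlt)
  have key : a 1 ^ t * a 0 ≤ (θ * a 0) ^ t * C := by
    calc a 1 ^ t * a 0 ≤ a 0 ^ t * a t := pow_mul_le_pow_mul_of_logConvex ha0 ha1 hlog t
      _ ≤ a 0 ^ t * (C * θ ^ t) := mul_le_mul_of_nonneg_left (hdecay t) (pow_nonneg ha0.le t)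
      _ = (θ * a 0) ^ t * C := by ring
  rw [div_pow, div_lt_div_iff₀ (pow_pos ha1 t) hC] at ht
  linarith

/-- The Markov operator of the walk that picks `j ∈ J` uniformly and moves to a sample of
`ν j σ`. -/
noncomputable def downUp (J : Finset (Fin k)) (ν : Fin k → Config n q → Config n q → ℝ)
    (g : Config n q → ℝ) : Config n q → ℝ :=
  fun σ => (J.card : ℝ)⁻¹ * ∑ j ∈ J, expVal (ν j σ) g

section DownUp

variable {μ : Config n q → ℝ} {J : Finset (Fin k)} {T : Fin k → Finset (Fin n)}
  {ν : Fin k → Config n q → Config n q → ℝ}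

theorem l2Inner_downUp (hconsist : ∀ j ∈ J, ∀ σ, μ σ ≠ 0 → restrictDist μ (T j) σ = ν j σ)
    (u v : Config n q → ℝ) :
    l2Inner μ u (downUp J ν v) = (J.card : ℝ)⁻¹ * ∑ j ∈ J, l2Inner μ u (condExpOn μ (T j) v) := by
  have hσ : ∀ σ, μ σ * (u σ * downUp J ν v σ) =
      (J.card : ℝ)⁻¹ * ∑ j ∈ J, μ σ * (u σ * condExpOn μ (T j) v σ) := fun σ => by
    by_cases h : μ σ = 0
    · simp [h]
    · simp only [downUp, condExpOn, mul_sum]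
      exact sum_congr rfl fun j hj => by rw [hconsist j hj σ h]; ring
  rw [l2Inner, sum_congr rfl fun σ _ => hσ σ, ← mul_sum, sum_comm]
  rfl

theorem l2Inner_downUp_comm
    (hconsist : ∀ j ∈ J, ∀ σ, μ σ ≠ 0 → restrictDist μ (T j) σ = ν j σ) (u v : Config n q → ℝ) :
    l2Inner μ u (downUp J ν v) = l2Inner μ (downUp J ν u) v := by
  rw [l2Inner_downUp hconsist, l2Inner_comm, l2Inner_downUp hconsist]
  simp only [l2Inner_condExpOn_comm, l2Inner_comm v]

theorem expVal_downUp (hconsist : ∀ j ∈ J, ∀ σ, μ σ ≠ 0 → restrictDist μ (T j) σ = ν j σ)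
    (hμ0 : ∀ σ, 0 ≤ μ σ) (hJ : J.Nonempty) (g : Config n q → ℝ) :
    expVal μ (downUp J ν g) = expVal μ g := by
  have hexp : ∀ h : Config n q → ℝ, expVal μ h = l2Inner μ (fun _ => 1) h := fun h => by
    simp [expVal, l2Inner]
  rw [hexp, l2Inner_downUp hconsist]
  simp only [← hexp, expVal_condExpOn hμ0, sum_const, nsmul_eq_mul]
  rw [inv_mul_cancel_left₀ (Nat.cast_ne_zero.2 hJ.card_pos.ne')]

theorem abs_downUp_sub_le {ρ : Fin n → ℕ} {A : Config n q → Prop} {L : ℝ}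
    {g : Config n q → ℝ} (hg : HamLipschitzOn ρ A L g) {π : Fin k → Config n q → Config n q → ℝ}
    {x y : Config n q} (hπ : ∀ j ∈ J, IsCoupling (ν j x) (ν j y) (π j))
    (hx : ∀ j ∈ J, ∀ w, ν j x w ≠ 0 → A w) (hy : ∀ j ∈ J, ∀ w, ν j y w ≠ 0 → A w) :
    |downUp J ν g x - downUp J ν g y| ≤ (J.card : ℝ)⁻¹ * (L * ∑ j ∈ J, expHam (π j) ρ) := by
  have hc : (0 : ℝ) ≤ (J.card : ℝ)⁻¹ := by positivity
  simp only [downUp]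
  rw [← mul_sub, ← sum_sub_distrib, abs_mul, abs_of_nonneg hc, mul_sum]
  exact mul_le_mul_of_nonneg_left ((abs_sum_le_sum_abs _ _).trans (sum_le_sum fun j hj =>
    hg.abs_expVal_sub_le (hπ j hj) (hx j hj) (hy j hj))) hc

end DownUp

section SpectralGap

variable {μ : Config n q → ℝ} {A : Config n q → Prop} {J : Finset (Fin k)}
  {T : Fin k → Finset (Fin n)} {ν : Fin k → Config n q → Config n q → ℝ} {ρ : Fin n → ℕ}
  {θ : ℝ}

theorem l2Inner_self_le_sq (hμ0 : ∀ σ, 0 ≤ μ σ) (hμ1 : ∑ σ, μ σ = 1) {h : Config n q → ℝ}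
    {B : ℝ} (hB : ∀ σ, μ σ ≠ 0 → |h σ| ≤ B) : l2Inner μ h h ≤ B ^ 2 := by
  calc l2Inner μ h h ≤ ∑ σ, μ σ * B ^ 2 := sum_le_sum fun σ _ => by
        by_cases hσ : μ σ = 0
        · simp [hσ]
        refine mul_le_mul_of_nonneg_left ?_ (hμ0 σ)
        rw [← abs_mul_abs_self, sq]
        exact mul_self_le_mul_self (abs_nonneg _) (hB σ hσ)
    _ = B ^ 2 := by rw [← sum_mul, hμ1, one_mul]

theorem l2Inner_downUp_le_of_contraction (hμ0 : ∀ σ, 0 ≤ μ σ) (hμ1 : ∑ σ, μ σ = 1)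
    (hA : ∀ σ, μ σ ≠ 0 → A σ) (hJ : J.Nonempty)
    (hconsist : ∀ j ∈ J, ∀ σ, μ σ ≠ 0 → restrictDist μ (T j) σ = ν j σ)
    (hρ : ∀ v, 0 < ρ v) (hθ : 0 ≤ θ)
    (hcontr : ∀ g L, 0 ≤ L → HamLipschitzOn ρ A L g →
      HamLipschitzOn ρ A (θ * L) (downUp J ν g))
    {f : Config n q → ℝ} (hf : expVal μ f = 0) :
    l2Inner μ f (downUp J ν f) ≤ θ * l2Inner μ f f := by
  set Q := downUp J ν
  set L₀ := 2 * ∑ σ, |f σ|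
  have hmean : ∀ s, expVal μ (Q^[s] f) = 0 := by
    intro s
    induction s with
    | zero => exact hf
    | succ s ih => rw [Function.iterate_succ_apply', expVal_downUp hconsist hμ0 hJ, ih]
  have hLip : ∀ s, HamLipschitzOn ρ A (θ ^ s * L₀) (Q^[s] f) := by
    intro s
    induction s with
    | zero => simpa using hamLipschitzOn_two_mul_sum_abs hρ f
    | succ s ih =>
      rw [Function.iterate_succ_apply', pow_succ', mul_assoc]
      exact hcontr _ _ (by positivity) ih
  set b : ℕ → ℝ := fun s => l2Inner μ (Q^[s] f) (Q^[s] f)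
  have hdecay : ∀ s, b s ≤ (L₀ * ∑ v, (ρ v : ℝ)) ^ 2 * (θ ^ 2) ^ s := fun s =>
    (l2Inner_self_le_sq hμ0 hμ1 fun σ hσ =>
      (hLip s).abs_le hμ0 hμ1 hA (by positivity) (hmean s) (hA σ hσ)).trans_eq (by ring)
  have hlog : ∀ s, b (s + 1) ^ 2 ≤ b s * b (s + 2) := fun s => by
    have : b (s + 1) = l2Inner μ (Q^[s] f) (Q^[s + 2] f) := by
      simp only [b, Function.iterate_succ_apply']
      exact (l2Inner_downUp_comm hconsist _ _).symm
    rw [this]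
    exact sq_l2Inner_le hμ0 _ _
  have hb : b 1 ≤ θ ^ 2 * b 0 :=
    le_mul_of_logConvex_of_le_geom (sq_nonneg θ) (fun s => l2Inner_self_nonneg hμ0 _) hlog hdecay
  have hsq : l2Inner μ f (Q f) ^ 2 ≤ (θ * l2Inner μ f f) ^ 2 :=
    calc l2Inner μ f (Q f) ^ 2 ≤ b 0 * b 1 := sq_l2Inner_le hμ0 _ _
      _ ≤ b 0 * (θ ^ 2 * b 0) := mul_le_mul_of_nonneg_left hb (l2Inner_self_nonneg hμ0 _)
      _ = (θ * l2Inner μ f f) ^ 2 := by simp only [b, Function.iterate_zero_apply]; ring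
  exact (le_abs_self _).trans
    (abs_le_of_sq_le_sq hsq (mul_nonneg hθ (l2Inner_self_nonneg hμ0 f)))

theorem one_sub_mul_varD_le_of_contraction (hμ0 : ∀ σ, 0 ≤ μ σ) (hμ1 : ∑ σ, μ σ = 1)
    (hA : ∀ σ, μ σ ≠ 0 → A σ) (hJ : J.Nonempty)
    (hconsist : ∀ j ∈ J, ∀ σ, μ σ ≠ 0 → restrictDist μ (T j) σ = ν j σ)
    (hρ : ∀ v, 0 < ρ v) (hθ : 0 ≤ θ)
    (hcontr : ∀ g L, 0 ≤ L → HamLipschitzOn ρ A L g →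
      HamLipschitzOn ρ A (θ * L) (downUp J ν g))
    (f : Config n q → ℝ) :
    (1 - θ) * varD μ f ≤ (J.card : ℝ)⁻¹ * ∑ j ∈ J, avgCondVar μ (T j)ᶜ f := by
  set f₀ : Config n q → ℝ := fun σ => f σ - expVal μ f
  have hf₀ : expVal μ f₀ = 0 := by rw [expVal_sub_const hμ1, sub_self]
  have havg : ∑ j ∈ J, avgCondVar μ (T j)ᶜ f =
      J.card * (l2Inner μ f₀ f₀ - l2Inner μ f₀ (downUp J ν f₀)) := by
    rw [l2Inner_downUp hconsist, mul_sub, mul_inv_cancel_left₀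
      (Nat.cast_ne_zero.2 hJ.card_pos.ne')]
    simp only [← avgCondVar_sub_const hμ0 _ f (expVal μ f), avgCondVar_compl_eq hμ0,
      sum_sub_distrib, sum_const, nsmul_eq_mul]
    rfl
  rw [havg, inv_mul_cancel_left₀ (Nat.cast_ne_zero.2 hJ.card_pos.ne'), varD_eq_l2Inner]
  linarith [l2Inner_downUp_le_of_contraction hμ0 hμ1 hA hJ hconsist hρ hθ hcontr hf₀]

end SpectralGap

section BlockDynamics

variable {G : SimpleGraph (Fin n)} (S : SpinSystem n q G) {ρ : Fin n → ℕ} {C : ℝ}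
  {U : Fin k → Finset (Fin n)}

theorem mem_unionBlocks_insert {R : Finset (Fin k)} {j : Fin k} {v : Fin n} :
    v ∈ unionBlocks U (insert j R) ↔ v ∈ U j ∨ v ∈ unionBlocks U R := by
  simp [unionBlocks]

theorem IsPartition.mem_unionBlocks_insert_iff (hU : IsPartition U) {R : Finset (Fin k)}
    {j₀ j : Fin k} {v₀ : Fin n} (hv₀ : v₀ ∈ U j₀) (hv₀R : v₀ ∉ unionBlocks U R) :
    v₀ ∈ unionBlocks U (insert j R) ↔ j = j₀ := by
  rw [mem_unionBlocks_insert, or_iff_left hv₀R]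
  refine ⟨fun hj => ?_, fun h => h ▸ hv₀⟩
  by_contra hne
  exact disjoint_left.1 (hU.1 j j₀ hne) hj hv₀

/-- Coupling independence where the pinned set contains `v₀`, the diagonal coupling elsewhere
(there the two conditionals coincide). -/
theorem exists_couplings_of_coupIndepWith (hCI : CoupIndepWith S ρ C)
    {T : Fin k → Finset (Fin n)} {J : Finset (Fin k)} {j₀ : Fin k} (hj₀ : j₀ ∈ J) {v₀ : Fin n}
    (hv₀ : v₀ ∈ T j₀) (hT : ∀ j ∈ J, j ≠ j₀ → v₀ ∉ T j) {x y : Config n q}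
    (hne : x v₀ ≠ y v₀) (hxy : ∀ v, v ≠ v₀ → x v = y v) :
    ∃ π : Fin k → Config n q → Config n q → ℝ,
      (∀ j, IsCoupling (condDist S (T j)ᶜ x) (condDist S (T j)ᶜ y) (π j)) ∧
        ∑ j ∈ J, expHam (π j) ρ ≤ C * ρ v₀ := by
  have hπ : ∀ j, ∃ π, IsCoupling (condDist S (T j)ᶜ x) (condDist S (T j)ᶜ y) π ∧
      (v₀ ∈ T j → expHam π ρ ≤ C * ρ v₀) ∧ (v₀ ∉ T j → expHam π ρ = 0) := fun j => by
    by_cases h : v₀ ∈ T j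
    · obtain ⟨π, hπ, hham⟩ := hCI.2 (T j) v₀ x y h hne fun v _ hv => hxy v hv
      exact ⟨π, hπ, fun _ => hham, fun h' => absurd h h'⟩
    · refine ⟨diagCoupling (condDist S (T j)ᶜ x), ?_, fun h' => absurd h' h,
        fun _ => expHam_diagCoupling _ _⟩
      rw [condDist_congr S (τ₁ := y) (τ₂ := x) fun v hv =>
        (hxy v fun hv₀ => h (hv₀ ▸ notMem_compl.1 hv)).symm]
      exact isCoupling_diagCoupling (condDist_nonneg S _ x)
  choose π hcpl hin hout using hπ
  refine ⟨π, hcpl, ?_⟩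
  rw [sum_eq_single_of_mem j₀ hj₀ fun j hj hne => hout j (hT j hj hne)]
  exact hin j₀ hv₀

theorem exists_blockCouplings (hCI : CoupIndepWith S ρ C) (hU : IsPartition U)
    {R : Finset (Fin k)} {v₀ : Fin n} (hv₀R : v₀ ∉ unionBlocks U R) {x y : Config n q}
    (hne : x v₀ ≠ y v₀) (hxy : ∀ v, v ≠ v₀ → x v = y v) :
    ∃ π : Fin k → Config n q → Config n q → ℝ,
      (∀ j, IsCoupling (condDist S (unionBlocks U (insert j R))ᶜ x)
        (condDist S (unionBlocks U (insert j R))ᶜ y) (π j)) ∧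
        ∑ j ∈ univ \ R, expHam (π j) ρ ≤ C * ρ v₀ := by
  obtain ⟨j₀, hj₀⟩ := hU.2 v₀
  have hmem := fun j => hU.mem_unionBlocks_insert_iff (R := R) (j := j) hj₀ hv₀R
  have hj₀R : j₀ ∉ R := fun h => hv₀R (mem_biUnion.2 ⟨j₀, h, hj₀⟩)
  exact exists_couplings_of_coupIndepWith S hCI (mem_sdiff.2 ⟨mem_univ _, hj₀R⟩)
    ((hmem j₀).2 rfl) (fun j _ hj => mt (hmem j).1 hj) hne hxy

theorem hamLipschitzOn_downUp (hCI : CoupIndepWith S ρ C) (hU : IsPartition U)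
    (R : Finset (Fin k)) (τ : Config n q) {L : ℝ} (hL : 0 ≤ L) {g : Config n q → ℝ}
    (hg : HamLipschitzOn ρ (fun σ => ∀ v ∈ unionBlocks U R, σ v = τ v) L g) :
    HamLipschitzOn ρ (fun σ => ∀ v ∈ unionBlocks U R, σ v = τ v)
      (C / ((univ \ R).card : ℝ) * L)
      (downUp (univ \ R) (fun j => condDist S (unionBlocks U (insert j R))ᶜ) g) := by
  refine hamLipschitzOn_of_adjacent (fun x y v hx hy w hw => ?_) fun x y v₀ hx hy hne hxy => ?_
  · by_cases hwv : w = v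
    · subst hwv; simpa using hy w hw
    · rw [Function.update_of_ne hwv]; exact hx w hw
  have hv₀R : v₀ ∉ unionBlocks U R := fun h => hne ((hx v₀ h).trans (hy v₀ h).symm)
  obtain ⟨π, hπ, hham⟩ := exists_blockCouplings S hCI hU hv₀R hne hxy
  have hsupp : ∀ {z : Config n q}, (∀ v ∈ unionBlocks U R, z v = τ v) → ∀ j w,
      condDist S (unionBlocks U (insert j R))ᶜ z w ≠ 0 → ∀ v ∈ unionBlocks U R, w v = τ v :=
    fun hz j w hw v hv => (eq_of_condDist_ne_zero S hw v
      (notMem_compl.2 (mem_unionBlocks_insert.2 (Or.inr hv)))).trans (hz v hv)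
  calc _ ≤ ((univ \ R).card : ℝ)⁻¹ * (L * ∑ j ∈ univ \ R, expHam (π j) ρ) :=
        abs_downUp_sub_le hg (fun j _ => hπ j) (fun j _ => hsupp hx j) (fun j _ => hsupp hy j)
    _ ≤ ((univ \ R).card : ℝ)⁻¹ * (L * (C * ρ v₀)) := by gcongr
    _ = C / ((univ \ R).card : ℝ) * L * ρ v₀ := by ring

theorem one_sub_mul_varD_condDist_le (hpos : PosCondMass S) (hCI : CoupIndepWith S ρ C)
    (hC : 0 ≤ C) (hU : IsPartition U) {R : Finset (Fin k)} (hR : (univ \ R).Nonempty)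
    (τ : Config n q) (f : Config n q → ℝ) :
    (1 - C / ((univ \ R).card : ℝ)) * varD (condDist S (unionBlocks U R)ᶜ τ) f ≤
      ((univ \ R).card : ℝ)⁻¹ * ∑ j ∈ univ \ R,
        avgCondVar (condDist S (unionBlocks U R)ᶜ τ) (unionBlocks U (insert j R))ᶜ f :=
  one_sub_mul_varD_le_of_contraction (condDist_nonneg S _ τ) (sum_condDist S hpos _ τ)
    (fun σ hσ v hv => eq_of_condDist_ne_zero S hσ v (notMem_compl.2 hv)) hR
    (fun j _ σ hσ => by
      simpa using restrictDist_condDist S hpos (compl_subset_compl.2 fun v hv =>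
        mem_unionBlocks_insert.2 (Or.inr hv)) hσ)
    hCI.1 (by positivity) (fun _ _ hL hg => hamLipschitzOn_downUp S hCI hU R τ hL hg) f

end BlockDynamics

theorem statement5_general {n q : ℕ} (G : SimpleGraph (Fin n)) (S : SpinSystem n q G)
    (hpos : PosCondMass S)
    (M k : ℕ) (hM : 1 ≤ M) (ρ : Fin n → ℕ) (hCI : CoupIndepWith S ρ (M : ℝ))
    (U : Fin k → Finset (Fin n)) (hU : IsPartition U)
    (r : ℕ) (hr : r + 2 * M ≤ k) (R : Finset (Fin k)) (hR : R.card = r)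
    (τ : Config n q) :
    (∀ f : Config n q → ℝ,
      varD (condDist S (unionBlocks U R)ᶜ τ) f ≤
        2 / ((k : ℝ) - (r : ℝ)) *
          ∑ j ∈ (univ : Finset (Fin k)) \ R,
            avgCondVar (condDist S (unionBlocks U R)ᶜ τ)
              (unionBlocks U (insert j R))ᶜ f)
    ∧
    (∀ (X Y : Config n q) (v₀ : Fin n), v₀ ∉ unionBlocks U R →
      X v₀ ≠ Y v₀ → (∀ v, v ≠ v₀ → X v = Y v) →
      ∃ π : Fin k → (Config n q → Config n q → ℝ),
        (∀ j ∈ (univ : Finset (Fin k)) \ R,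
          IsCoupling
            (condDist S (unionBlocks U (insert j R))ᶜ
              (fun v => if v ∈ unionBlocks U R then τ v else X v))
            (condDist S (unionBlocks U (insert j R))ᶜ
              (fun v => if v ∈ unionBlocks U R then τ v else Y v))
            (π j)) ∧
        (1 / ((k : ℝ) - (r : ℝ))) *
            ∑ j ∈ (univ : Finset (Fin k)) \ R, expHam (π j) ρ ≤
          (M : ℝ) / ((k : ℝ) - (r : ℝ)) * (ρ v₀ : ℝ) ∧
        (M : ℝ) / ((k : ℝ) - (r : ℝ)) * (ρ v₀ : ℝ) ≤ (1 / 2) * (ρ v₀ : ℝ)) := by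
  have hcard : (((univ : Finset (Fin k)) \ R).card : ℝ) = k - r := by
    rw [card_sdiff_of_subset (subset_univ R), card_univ, Fintype.card_fin, hR,
      Nat.cast_sub (by omega)]
  have hkr : (0 : ℝ) < k - r := by
    rw [sub_pos]; exact_mod_cast (by omega : r < k)
  have hθ : (M : ℝ) / (k - r) ≤ 1 / 2 := by
    have : (r : ℝ) + 2 * M ≤ k := by exact_mod_cast hr
    rw [div_le_div_iff₀ hkr two_pos]; linarith
  refine ⟨fun f => ?_, fun X Y v₀ hv₀R hne hXY => ?_⟩
  · have hgap := one_sub_mul_varD_condDist_le S hpos hCI (Nat.cast_nonneg M) hU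
      (card_pos.1 (by exact_mod_cast hcard ▸ hkr)) τ f
    rw [hcard] at hgap
    have hvar := varD_nonneg (condDist_nonneg S (unionBlocks U R)ᶜ τ) f
    rw [div_eq_mul_inv 2, mul_assoc]
    nlinarith
  · set x : Config n q := fun v => if v ∈ unionBlocks U R then τ v else X v
    set y : Config n q := fun v => if v ∈ unionBlocks U R then τ v else Y v
    have hxy : ∀ v, v ≠ v₀ → x v = y v := fun v hv => by
      simp only [x, y]; split_ifs <;> simp [hXY v hv]
    obtain ⟨π, hπ, hham⟩ := exists_blockCouplings S hCI hU hv₀R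
      (by simpa [x, y, hv₀R] using hne) hxy
    refine ⟨π, fun j _ => hπ j, ?_, mul_le_mul_of_nonneg_right hθ (Nat.cast_nonneg _)⟩
    calc 1 / ((k : ℝ) - r) * ∑ j ∈ univ \ R, expHam (π j) ρ ≤ 1 / ((k : ℝ) - r) * (M * ρ v₀) :=
          mul_le_mul_of_nonneg_left hham (by positivity)
      _ = M / ((k : ℝ) - r) * ρ v₀ := by ring

/-- Lemma 5.2: path coupling for the `(k−r) ↔ 1` down-up
walk.  If `μ` is `M`-coupling independent with witnessing weight `ρ`,
`0 ≤ r ≤ k−2M`, `|R| = r` and `τ` is any pinning on `U_R`, then (a) the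
`(k−r) ↔ 1` down-up walk on `μ^τ` has relaxation time at most `2`, and (b)
for any two configurations on `V∖U_R` differing at exactly one vertex `v₀`
there is a one-step coupling (same uniformly random `j ∈ [k]∖R`, then coupled
resampling outside `U_{R∪{j}}`) whose expected weighted Hamming distance is at
most `(M/(k−r))·ρ(v₀) ≤ (1/2)·ρ(v₀)`. -/
theorem statement5 {n q : ℕ} (G : SimpleGraph (Fin n)) (S : SpinSystem n q G)
    (hq : 2 ≤ q) (hpos : PosCondMass S)
    (M k : ℕ) (hM : 1 ≤ M) (ρ : Fin n → ℕ) (hCI : CoupIndepWith S ρ (M : ℝ))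
    (U : Fin k → Finset (Fin n)) (hU : IsPartition U)
    (r : ℕ) (hr : r + 2 * M ≤ k) (R : Finset (Fin k)) (hR : R.card = r)
    (τ : Config n q) :
    (∀ f : Config n q → ℝ,
      varD (condDist S (unionBlocks U R)ᶜ τ) f ≤
        2 / ((k : ℝ) - (r : ℝ)) *
          ∑ j ∈ (univ : Finset (Fin k)) \ R,
            avgCondVar (condDist S (unionBlocks U R)ᶜ τ)
              (unionBlocks U (insert j R))ᶜ f)
    ∧
    (∀ (X Y : Config n q) (v₀ : Fin n), v₀ ∉ unionBlocks U R →
      X v₀ ≠ Y v₀ → (∀ v, v ≠ v₀ → X v = Y v) →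
      ∃ π : Fin k → (Config n q → Config n q → ℝ),
        (∀ j ∈ (univ : Finset (Fin k)) \ R,
          IsCoupling
            (condDist S (unionBlocks U (insert j R))ᶜ
              (fun v => if v ∈ unionBlocks U R then τ v else X v))
            (condDist S (unionBlocks U (insert j R))ᶜ
              (fun v => if v ∈ unionBlocks U R then τ v else Y v))
            (π j)) ∧
        (1 / ((k : ℝ) - (r : ℝ))) *
            ∑ j ∈ (univ : Finset (Fin k)) \ R, expHam (π j) ρ ≤
          (M : ℝ) / ((k : ℝ) - (r : ℝ)) * (ρ v₀ : ℝ) ∧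
        (M : ℝ) / ((k : ℝ) - (r : ℝ)) * (ρ v₀ : ℝ) ≤ (1 / 2) * (ρ v₀ : ℝ)) :=
  statement5_general G S hpos M k hM ρ hCI U hU r hr R hR τ

end Paper
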